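/- Let F be a finite field with q elements and let s, d, t be positive integers with s > dt. Let j be a positive integer such that either q^j + 1 ≥ s, or q^j is even, s − dt ∈ {3, q^j − 1}, and q^j + 2 ≥ s. Then there exists a block totally nonsingular matrix consisting of an (s − dt) × dt array of invertible j × j blocks over F. -/

import Mathlib

/-- A block matrix (an r × u array of j × j blocks) is block totally nonsingular if
every square sub-array of blocks is nonsingular. -/
def IsBlockTotallyNonsingular {F : Type*} [Field F] {r u j : ℕ}
    (A : Matrix (Fin r × Fin j) (Fin u × Fin j) F) : Prop :=
  ∀ (k : ℕ), 1 ≤ k → ∀ (ρ : Fin k → Fin r) (σ : Fin k → Fin u),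
    Function.Injective ρ → Function.Injective σ →
      (Matrix.of fun p q : Fin k × Fin j => A (ρ p.1, p.2) (σ q.1, q.2)).det ≠ 0

/-!
The blocks are realised through the regular representation of the degree-`j` extension `K` of
`F`, which has `q ^ j` elements: applying a ring homomorphism `K →+* Matrix (Fin j) (Fin j) F`
entrywise to a `K`-matrix whose square minors are all nonzero gives a block totally nonsingular
matrix, since each square block-submatrix is the image of an invertible matrix.

An `r × u` totally nonsingular matrix over `K` exists when `r + u ≤ |K| + 1`: evaluate the
Lagrange basis of `r` distinct nodes at `u` further points of the projective line. A singular
minor would give a nonzero polynomial of degree `< r` with `r` zeros, a zero at `∞` meaning a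
vanishing coefficient of `X ^ (r - 1)`. In characteristic `2` the `3 × (|K| - 1)` matrix
`(x ^ i)` over the nonzero `x` is totally nonsingular as well: its `2 × 2` minors reduce to
`y - x` or `y ^ 2 - x ^ 2 = (y - x) ^ 2`, its `3 × 3` minors are Vandermonde determinants.
-/

open Polynomial Finset

section

variable {K : Type*} [Field K]

def IsTotallyNonsingular {m n : Type*} (M : Matrix m n K) : Prop :=
  ∀ (k : ℕ) (ρ : Fin k → m) (σ : Fin k → n),
    Function.Injective ρ → Function.Injective σ → (M.submatrix ρ σ).det ≠ 0

theorem IsTotallyNonsingular.transpose {m n : Type*} {M : Matrix m n K}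
    (hM : IsTotallyNonsingular M) :
    IsTotallyNonsingular M.transpose := fun k ρ σ hρ hσ => by
  rw [← Matrix.transpose_submatrix, Matrix.det_transpose]
  exact hM k σ ρ hσ hρ

theorem IsTotallyNonsingular.isBlockTotallyNonsingular_map {F : Type*} [Field F] {r u j : ℕ}
    {M : Matrix (Fin r) (Fin u) K} (hM : IsTotallyNonsingular M)
    (φ : K →+* Matrix (Fin j) (Fin j) F) :
    IsBlockTotallyNonsingular (Matrix.of fun p q => φ (M p.1 q.1) p.2 q.2) := by
  intro k _ ρ σ hρ hσ
  have hunit : IsUnit ((M.submatrix ρ σ).map φ) :=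
    ((Matrix.isUnit_iff_isUnit_det _).mpr (hM k ρ σ hρ hσ).isUnit).map φ.mapMatrix
  have hblock : (Matrix.of fun p q : Fin k × Fin j =>
      (Matrix.of fun p q => φ (M p.1 q.1) p.2 q.2) (ρ p.1, p.2) (σ q.1, q.2)) =
      Matrix.compRingEquiv (Fin k) (Fin j) F ((M.submatrix ρ σ).map φ) := rfl
  rw [hblock]
  exact ((Matrix.isUnit_iff_isUnit_det _).mp (hunit.map _)).ne_zero

/-- Evaluation of polynomials of degree `< d` at a point of the projective line `Option K`;
the value at `∞ = none` is the coefficient of `X ^ (d - 1)`. -/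
noncomputable def projEval (d : ℕ) : Option K → K[X] →ₗ[K] K
  | some x => leval x
  | none => lcoeff K (d - 1)

theorem Polynomial.eq_zero_of_degree_lt_of_projEval_eq_zero {f : K[X]} {d : ℕ}
    (s : Finset (Option K)) (hf : f.degree < d) (hs : d ≤ #s)
    (h : ∀ x ∈ s, projEval d x f = 0) : f = 0 := by
  have hfin : ∀ x ∈ s.eraseNone, f.eval x = 0 := fun x hx => h _ (mem_eraseNone.mp hx)
  by_cases hnone : none ∈ s
  · have hf' : f.degree < ↑(d - 1) := by
      rw [degree_lt_iff_coeff_zero] at hf ⊢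
      intro i hi
      rcases hi.eq_or_lt with rfl | hi
      · exact h none hnone
      · exact hf i (by omega)
    refine eq_zero_of_degree_lt_of_eval_finset_eq_zero _ (hf'.trans_le ?_) hfin
    rw [card_eraseNone_of_mem hnone]
    exact_mod_cast Nat.sub_le_sub_right hs 1
  · refine eq_zero_of_degree_lt_of_eval_finset_eq_zero _ (hf.trans_le ?_) hfin
    rw [card_eraseNone_of_not_mem hnone]
    exact_mod_cast hs

section Lagrange

variable {m n : Type*} [Fintype m] [DecidableEq m]

noncomputable def lagrangeMatrix (a : m → K) (b : n → Option K) : Matrix m n K :=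
  Matrix.of fun i k => projEval (Fintype.card m) (b k) (Lagrange.basis univ a i)

theorem isTotallyNonsingular_lagrangeMatrix {a : m → K} {b : n → Option K}
    (ha : Function.Injective a) (hb : Function.Injective b) (hab : ∀ i k, some (a i) ≠ b k) :
    IsTotallyNonsingular (lagrangeMatrix a b) := by
  classical
  intro k ρ σ hρ hσ hdet
  obtain ⟨c, hc, hcM⟩ := Matrix.exists_vecMul_eq_zero_iff.mpr hdet
  set f := ∑ p, c p • Lagrange.basis univ a (ρ p) with hf
  have hbasis_deg : ∀ i, Lagrange.basis univ a i ∈ degreeLT K (Fintype.card m) := fun i => by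
    rw [mem_degreeLT, Lagrange.degree_basis ha.injOn (mem_univ i), card_univ]
    exact_mod_cast Nat.sub_lt (Fintype.card_pos_iff.mpr ⟨i⟩) one_pos
  have hf_deg : f.degree < Fintype.card m :=
    mem_degreeLT.mp (Submodule.sum_mem _ fun p _ => Submodule.smul_mem _ _ (hbasis_deg _))
  have hf_eval : ∀ i, f.eval (a i) = ∑ p, if ρ p = i then c p else 0 := fun i => by
    simp only [hf, eval_finsetSum, eval_smul, smul_eq_mul]
    refine sum_congr rfl fun p _ => ?_
    split_ifs with h
    · rw [h, Lagrange.eval_basis_self ha.injOn (mem_univ i), mul_one]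
    · rw [Lagrange.eval_basis_of_ne h (mem_univ i), mul_zero]
  set s : Finset (Option K) :=
    (univ.image ρ)ᶜ.image (some ∘ a) ∪ univ.image (b ∘ σ) with hs
  have hs_card : Fintype.card m ≤ #s := by
    have hk : k ≤ Fintype.card m := by simpa using Fintype.card_le_of_injective ρ hρ
    rw [hs, card_union_of_disjoint, card_image_of_injective _ (Option.some_injective _ |>.comp ha),
      card_image_of_injective _ (hb.comp hσ), card_compl, card_image_of_injective _ hρ]
    · simp only [card_univ, Fintype.card_fin]; omega
    · simp only [disjoint_left, mem_image]
      rintro _ ⟨i, -, rfl⟩ ⟨p, -, hp⟩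
      exact hab i (σ p) hp.symm
  have hf_vanish : ∀ x ∈ s, projEval (Fintype.card m) x f = 0 := by
    simp only [hs, mem_union, mem_image, mem_compl, mem_univ, true_and]
    rintro _ (⟨i, hi, rfl⟩ | ⟨p, rfl⟩)
    · exact (hf_eval i).trans (sum_eq_zero fun p _ => if_neg fun h => hi ⟨p, h⟩)
    · simpa [hf, map_sum, Matrix.vecMul, dotProduct, lagrangeMatrix, mul_comm] using
        congrFun hcM p
  have hf0 := eq_zero_of_degree_lt_of_projEval_eq_zero s hf_deg hs_card hf_vanish
  refine hc (funext fun p => ?_)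
  have := hf_eval (ρ p)
  rw [hf0, eval_zero, sum_eq_single p (fun p' _ hp' => if_neg (hρ.ne hp')) (by simp),
    if_pos rfl] at this
  exact this.symm

theorem exists_isTotallyNonsingular_of_card_add_card_le [Fintype K] [Fintype n] [Nonempty n]
    (h : Fintype.card m + Fintype.card n ≤ Fintype.card K + 1) :
    ∃ M : Matrix m n K, IsTotallyNonsingular M := by
  classical
  obtain ⟨a⟩ : Nonempty (m ↪ K) :=
    Function.Embedding.nonempty_of_card_le (by have := Fintype.card_pos (α := n); omega)
  let T : Finset (Option K) := (univ.map (a.trans .some))ᶜ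
  obtain ⟨b⟩ : Nonempty (n ↪ T) := Function.Embedding.nonempty_of_card_le <| by
    rw [Fintype.card_coe, card_compl, card_map, card_univ, Fintype.card_option]
    omega
  refine ⟨_, isTotallyNonsingular_lagrangeMatrix a.injective
    (Subtype.val_injective.comp b.injective) fun i k hik => ?_⟩
  exact mem_compl.mp (b k).2 (mem_map.mpr ⟨i, mem_univ i, hik⟩)

end Lagrange

section CharTwo

variable [CharP K 2] {n : Type*}

theorem pow_mul_pow_ne_pow_mul_pow_of_charTwo {x y : K} (hx : x ≠ 0) (hy : y ≠ 0)
    (hxy : x ≠ y) {a b : ℕ} (hab : a < b) (hb : b ≤ a + 2) :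
    x ^ a * y ^ b ≠ y ^ a * x ^ b := by
  obtain ⟨e, rfl⟩ : ∃ e, b = a + e := ⟨b - a, by omega⟩
  intro h
  have h' : (x * y) ^ a * (y ^ e - x ^ e) = 0 := by linear_combination h
  have hpow : y ^ e = x ^ e :=
    sub_eq_zero.mp ((mul_eq_zero.mp h').resolve_left (pow_ne_zero _ (mul_ne_zero hx hy)))
  obtain ⟨he1, he2⟩ : 0 < e ∧ e ≤ 2 := ⟨by omega, by omega⟩
  interval_cases e
  · exact hxy (pow_one y ▸ pow_one x ▸ hpow).symm
  · exact hxy (CharTwo.sq_injective hpow).symm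

theorem isTotallyNonsingular_fin_three_pow_of_charTwo {x : n → K}
    (hx : Function.Injective x) (hx0 : ∀ k, x k ≠ 0) :
    IsTotallyNonsingular (Matrix.of fun (i : Fin 3) k => x k ^ (i : ℕ)) := by
  intro k ρ σ hρ hσ
  have hk : k ≤ 3 := by simpa using Fintype.card_le_of_injective ρ hρ
  interval_cases k
  · simp
  · rw [Matrix.det_unique]
    exact pow_ne_zero _ (hx0 _)
  · rw [Matrix.det_fin_two]
    simp only [Matrix.submatrix_apply, Matrix.of_apply]
    have hσ01 : x (σ 0) ≠ x (σ 1) := hx.ne (hσ.ne (by decide))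
    refine sub_ne_zero.mpr ?_
    rcases lt_or_gt_of_ne (Fin.val_ne_of_ne (hρ.ne (by decide : (0 : Fin 2) ≠ 1))) with h | h
    · exact pow_mul_pow_ne_pow_mul_pow_of_charTwo (hx0 _) (hx0 _) hσ01 h (by omega)
    · intro h'
      refine pow_mul_pow_ne_pow_mul_pow_of_charTwo (hx0 _) (hx0 _) hσ01.symm h (by omega) ?_
      linear_combination h'
  · let π := Equiv.ofBijective ρ (Finite.injective_iff_bijective.mp hρ)
    have hV : (Matrix.of fun (i : Fin 3) k => x k ^ (i : ℕ)).submatrix ρ σ =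
        (Matrix.vandermonde (x ∘ σ)).transpose.submatrix π id := by
      ext
      simp [π, Matrix.vandermonde]
    rw [hV, Matrix.det_permute, Matrix.det_transpose]
    refine mul_ne_zero ?_ (Matrix.det_vandermonde_ne_zero_iff.mpr (hx.comp hσ))
    rcases Int.units_eq_one_or (Equiv.Perm.sign π) with h | h <;> simp [h]

theorem exists_isTotallyNonsingular_fin_three_of_charTwo [Fintype K] [Fintype n]
    (h : Fintype.card n < Fintype.card K) :
    ∃ M : Matrix (Fin 3) n K, IsTotallyNonsingular M := by
  classical
  obtain ⟨x⟩ : Nonempty (n ↪ {y : K // y ≠ 0}) := by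
    refine Function.Embedding.nonempty_of_card_le ?_
    rw [Fintype.card_subtype_compl, Fintype.card_subtype_eq]
    omega
  exact ⟨_, isTotallyNonsingular_fin_three_pow_of_charTwo
    (Subtype.val_injective.comp x.injective) fun k => (x k).2⟩

end CharTwo

theorem FiniteField.exists_isTotallyNonsingular [Fintype K] {r u : ℕ} (hu : 0 < u)
    (hcond : r + u ≤ Fintype.card K + 1 ∨ (Even (Fintype.card K) ∧
      (r = 3 ∨ r = Fintype.card K - 1) ∧ r + u ≤ Fintype.card K + 2)) :
    ∃ M : Matrix (Fin r) (Fin u) K, IsTotallyNonsingular M := by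
  have : Nonempty (Fin u) := ⟨⟨0, hu⟩⟩
  by_cases hle : r + u ≤ Fintype.card K + 1
  · exact exists_isTotallyNonsingular_of_card_add_card_le (by simpa using hle)
  obtain ⟨heven, hr, hle'⟩ := hcond.resolve_left hle
  have : CharP K 2 :=
    ringChar.of_eq (FiniteField.even_card_iff_char_two.mpr (Nat.even_iff.mp heven))
  have hKpos := Fintype.card_pos (α := K)
  rcases hr with rfl | hr
  · exact exists_isTotallyNonsingular_fin_three_of_charTwo
      (by simp only [Fintype.card_fin]; omega)
  · obtain rfl : u = 3 := by omega
    obtain ⟨M, hM⟩ := exists_isTotallyNonsingular_fin_three_of_charTwo (K := K) (n := Fin r)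
      (by simp only [Fintype.card_fin]; omega)
    exact ⟨M.transpose, hM.transpose⟩

end

theorem stmt_15_general {F : Type*} [Field F] [Fintype F] {q s d t j : ℕ}
    (hq : Fintype.card F = q)
    (hd : 0 < d) (ht : 0 < t) (hst : d * t < s) (hj : 0 < j)
    (hcond : s ≤ q ^ j + 1 ∨
      (Even (q ^ j) ∧ (s - d * t = 3 ∨ s - d * t = q ^ j - 1) ∧ s ≤ q ^ j + 2)) :
    ∃ A : Matrix (Fin (s - d * t) × Fin j) (Fin (d * t) × Fin j) F,
      IsBlockTotallyNonsingular A := by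
  obtain ⟨p, _⟩ := CharP.exists F
  have : Fact p.Prime := ⟨CharP.char_is_prime F p⟩
  have : NeZero j := ⟨hj.ne'⟩
  let K := FiniteField.Extension F p j
  let : Fintype K := Fintype.ofFinite K
  have hK : Fintype.card K = q ^ j := by
    rw [Fintype.card_eq_nat_card, FiniteField.natCard_extension, Nat.card_eq_fintype_card, hq]
  obtain ⟨M, hM⟩ := FiniteField.exists_isTotallyNonsingular (K := K) (r := s - d * t)
    (Nat.mul_pos hd ht) <| by
      rw [hK]
      exact hcond.imp (by omega) fun ⟨heven, hr, hle⟩ => ⟨heven, hr, by omega⟩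
  let b := Module.finBasisOfFinrankEq F K (FiniteField.finrank_extension F p j)
  exact ⟨_, hM.isBlockTotallyNonsingular_map (Algebra.leftMulMatrix b).toRingHom⟩

/-- Let F be a finite field with q elements and s, d, t positive
integers with s > dt.  Let j be a positive integer such that either q^j + 1 ≥ s, or
q^j is even, s − dt ∈ {3, q^j − 1}, and q^j + 2 ≥ s.  Then there exists a block
totally nonsingular (s − dt) × dt array of invertible j × j blocks over F. -/
theorem stmt_15 {F : Type*} [Field F] [Fintype F] {q s d t j : ℕ}
    (hq : Fintype.card F = q)
    (hs : 0 < s) (hd : 0 < d) (ht : 0 < t) (hst : d * t < s) (hj : 0 < j)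
    (hcond : s ≤ q ^ j + 1 ∨
      (Even (q ^ j) ∧ (s - d * t = 3 ∨ s - d * t = q ^ j - 1) ∧ s ≤ q ^ j + 2)) :
    ∃ A : Matrix (Fin (s - d * t) × Fin j) (Fin (d * t) × Fin j) F,
      IsBlockTotallyNonsingular A :=
  stmt_15_general hq hd ht hst hj hcond
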